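/- arXiv:1512.05998 — 6 statements merged into one kernel-verified Lean document; each statement's English description precedes it below -/
import Mathlib

section
/- Let F ⊆ F₀ ⊆ F₁ be a tower of fields, u a tuple from F₁, and I the ideal of polynomials over F₀ vanishing at u. If F(u) and F₀ are linearly disjoint over F, then I is generated by its intersection with F[X̄], i.e., I = (I ∩ F[X̄])·F₀[X̄]. -/
/-!
A polynomial over `F₀` vanishing at `u` is an `F₀`-linear relation among the monomial values
`u^d`. Pick, among the monomial values in its support, an `F`-basis `u^e`, `e ∈ t`, of their
`F`-span, and write every other `u^d` as an `F`-combination of it; this gives relations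
`X^d - ∑ a_{d,e} X^e` over `F`. Subtracting the matching `F₀`-combination of these relations
leaves a relation supported on `t`, which is zero because linear disjointness keeps the basis
`F₀`-linearly independent.
-/
open Finsupp Submodule

section LinearCombination

variable {E ι : Type*} [DivisionRing E] {K L : Subfield E} (hKL : K ≤ L) (w : ι → E)

theorem Subfield.linearCombination_mapRange_inclusion (r : ι →₀ K) :
    linearCombination L w (mapRange (Subfield.inclusion hKL) (map_zero _) r) =
      linearCombination K w r := by
  rw [linearCombination_apply, linearCombination_apply, sum_mapRange_index (by simp)]
  rfl

theorem Subfield.span_mapRange_ker_linearCombination_le :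
    span L (mapRange (Subfield.inclusion hKL) (map_zero _) ''
      (LinearMap.ker (linearCombination K w) : Set (ι →₀ K)))
      ≤ LinearMap.ker (linearCombination L w) := by
  rw [span_le]
  rintro _ ⟨r, hr, rfl⟩
  simpa [Subfield.linearCombination_mapRange_inclusion] using hr

theorem Subfield.mem_span_mapRange_ker_linearCombination {s t : Set ι}
    (ht : LinearIndepOn L w t) (hst : w '' s ⊆ span K (w '' t)) {c : ι →₀ L}
    (hc : c ∈ supported L L s) (hc0 : linearCombination L w c = 0) :
    c ∈ span L (mapRange (Subfield.inclusion hKL) (map_zero _) ''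
      (LinearMap.ker (linearCombination K w) : Set (ι →₀ K))) := by
  set J := span L (mapRange (Subfield.inclusion hKL) (map_zero _) ''
      (LinearMap.ker (linearCombination K w) : Set (ι →₀ K)))
  have hl : ∀ i, ∃ l ∈ supported K K t, i ∈ s → linearCombination K w l = w i := by
    intro i
    by_cases hi : i ∈ s
    · obtain ⟨l, hl, hlw⟩ := mem_span_image_iff_linearCombination K |>.1 (hst ⟨i, hi, rfl⟩)
      exact ⟨l, hl, fun _ => hlw⟩
    · exact ⟨0, zero_mem _, fun h => absurd h hi⟩
  choose l hlt hlw using hl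
  let lift : (ι →₀ K) → (ι →₀ L) := mapRange (Subfield.inclusion hKL) (map_zero _)
  set d := linearCombination L (fun i => lift (l i)) c
  -- `c - d` is a combination of the relations `single i 1 - l i` among the `w i`, `i ∈ s`.
  have hcd : c - d ∈ J := by
    have : c - d = linearCombination L (fun i => single i 1 - lift (l i)) c := by
      simp only [d, linearCombination_apply, smul_sub, sum_sub, smul_single_one, sum_single]
    rw [this]
    refine span_le.2 ?_ (mem_span_image_iff_linearCombination L |>.2 ⟨c, hc, rfl⟩)
    rintro _ ⟨i, hi, rfl⟩
    refine subset_span ⟨single i 1 - l i, ?_, ?_⟩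
    · simp [hlw i hi]
    · rw [mapRange_sub (map_sub _), mapRange_single, map_one]
  have hd : d = 0 := by
    refine linearIndepOn_iff.1 ht d ?_ ?_
    · exact sum_mem fun i _ => smul_mem _ _ <| (mem_supported _ _).2 <|
        (Finset.coe_subset.2 support_mapRange).trans <| (mem_supported _ _).1 (hlt i)
    · have := Subfield.span_mapRange_ker_linearCombination_le hKL w hcd
      rwa [LinearMap.mem_ker, map_sub, hc0, zero_sub, neg_eq_zero] at this
  simpa [hd] using hcd

theorem Subfield.ker_linearCombination_eq_span_mapRange
    (hw : ∀ b : Set ι, b.Finite → LinearIndepOn K w b → LinearIndepOn L w b) :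
    LinearMap.ker (linearCombination L w) =
      span L (mapRange (Subfield.inclusion hKL) (map_zero _) ''
        (LinearMap.ker (linearCombination K w) : Set (ι →₀ K))) := by
  refine le_antisymm (fun c hc => ?_) (Subfield.span_mapRange_ker_linearCombination_le hKL w)
  obtain ⟨b, hbc, -, hspan, hbK⟩ :=
    exists_linearIndepOn_extension (linearIndepOn_empty K w) (Set.empty_subset c.support)
  exact Subfield.mem_span_mapRange_ker_linearCombination hKL w
    (hw b (c.support.finite_toSet.subset hbc) hbK) hspan (mem_supported L c |>.2 subset_rfl) hc

end LinearCombination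

theorem LinearIndepOn.of_forall_fin {R R' M ι : Type*} [Semiring R] [Semiring R']
    [AddCommMonoid M] [Module R M] [Module R' M] {A : Set M}
    (h : ∀ (m : ℕ) (v : Fin m → M), (∀ i, v i ∈ A) →
      LinearIndependent R v → LinearIndependent R' v)
    {w : ι → M} {b : Set ι} (hb : b.Finite) (hbA : ∀ i ∈ b, w i ∈ A)
    (hK : LinearIndepOn R w b) :
    LinearIndepOn R' w b := by
  have := hb.fintype
  let e := (Fintype.equivFin b).symm
  rw [LinearIndepOn, ← linearIndependent_equiv e] at hK ⊢
  exact h _ _ (fun i => hbA _ (e i).2) hK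

namespace MvPolynomial

theorem aeval_eq_linearCombination {σ R S : Type*} [CommSemiring R] [CommSemiring S]
    [Algebra R S] (u : σ → S) (p : MvPolynomial σ R) :
    aeval u p = linearCombination R (fun d : σ →₀ ℕ => d.prod fun i k => u i ^ k)
      ((basisMonomials σ R).repr p) := by
  change (aeval u).toLinearMap p =
    ((linearCombination R _) ∘ₗ (basisMonomials σ R).repr.toLinearMap) p
  congr 1
  refine (basisMonomials σ R).ext fun d => ?_
  have hrepr := (basisMonomials σ R).repr_self d
  rw [coe_basisMonomials] at hrepr
  simp [aeval_monomial, hrepr]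

variable {σ E : Type*} [Field E] {K L : Subfield E} (hKL : K ≤ L) (u : σ → E)

theorem aeval_map_subfieldInclusion (q : MvPolynomial σ K) :
    aeval u (map (Subfield.inclusion hKL) q) = aeval u q := by
  rw [aeval_def, eval₂_map]
  rfl

theorem ker_aeval_eq_span_map
    (hw : ∀ b : Set (σ →₀ ℕ), b.Finite →
      LinearIndepOn K (fun d => d.prod fun i k => u i ^ k) b →
      LinearIndepOn L (fun d => d.prod fun i k => u i ^ k) b) :
    RingHom.ker (aeval u : MvPolynomial σ L →ₐ[L] E) =
      Ideal.span (map (Subfield.inclusion hKL) ''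
        RingHom.ker (aeval u : MvPolynomial σ K →ₐ[K] E)) := by
  refine le_antisymm (fun p hp => ?_) (Ideal.span_le.2 ?_)
  · set e := basisMonomials σ L
    have hc : e.repr p ∈ span L (mapRange (Subfield.inclusion hKL) (map_zero _) ''
        (LinearMap.ker (linearCombination K fun d : σ →₀ ℕ => d.prod fun i k => u i ^ k) :
          Set ((σ →₀ ℕ) →₀ K))) := by
      rw [← Subfield.ker_linearCombination_eq_span_mapRange hKL _ hw, LinearMap.mem_ker,
        ← aeval_eq_linearCombination]
      exact hp
    have hp' := mem_map_of_mem (f := e.repr.symm.toLinearMap) hc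
    rw [LinearEquiv.coe_coe, LinearEquiv.symm_apply_apply, map_span] at hp'
    refine span_le_restrictScalars L _ _ (span_mono ?_ hp')
    rintro _ ⟨_, ⟨r, hr, rfl⟩, rfl⟩
    refine ⟨(basisMonomials σ K).repr.symm r, ?_, rfl⟩
    rw [SetLike.mem_coe, RingHom.mem_ker, aeval_eq_linearCombination,
      LinearEquiv.apply_symm_apply]
    exact hr
  · rintro _ ⟨q, hq, rfl⟩
    rwa [SetLike.mem_coe, RingHom.mem_ker, aeval_map_subfieldInclusion]

end MvPolynomial

/-- Let `F ⊆ F₀ ⊆ F₁` be a tower of fields, `u` a tuple from `F₁`, and `I`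
the ideal of polynomials over `F₀` vanishing at `u`.  If `F(u)` and `F₀` are linearly
disjoint over `F`, then `I` is generated by its intersection with `F[X̄]`:
`I = (I ∩ F[X̄])·F₀[X̄]`. -/
theorem stmt3 {F₁ : Type*} [Field F₁] (F F₀ : Subfield F₁) (hFF₀ : F ≤ F₀)
    (n : ℕ) (u : Fin n → F₁)
    (hLD : ∀ (m : ℕ) (v : Fin m → F₁),
      (∀ i, v i ∈ Subfield.closure ((F : Set F₁) ∪ Set.range u)) →
      LinearIndependent (↥F) v → LinearIndependent (↥F₀) v) :
    RingHom.ker (MvPolynomial.aeval u : MvPolynomial (Fin n) (↥F₀) →ₐ[↥F₀] F₁) =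
      Ideal.span ((MvPolynomial.map (Subfield.inclusion hFF₀)) ''
        {q : MvPolynomial (Fin n) (↥F) |
          MvPolynomial.map (Subfield.inclusion hFF₀) q ∈
            RingHom.ker (MvPolynomial.aeval u : MvPolynomial (Fin n) (↥F₀) →ₐ[↥F₀] F₁)}) := by
  have hmonomial : ∀ d : Fin n →₀ ℕ,
      (d.prod fun i k => u i ^ k) ∈ Subfield.closure ((F : Set F₁) ∪ Set.range u) := fun d =>
    prod_mem fun i _ =>
      pow_mem (Subfield.subset_closure (Set.mem_union_right _ (Set.mem_range_self i))) _
  convert MvPolynomial.ker_aeval_eq_span_map hFF₀ u fun b hb =>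
    LinearIndepOn.of_forall_fin hLD hb fun d _ => hmonomial d using 3
  ext q
  simp [MvPolynomial.aeval_map_subfieldInclusion]
end

section
/- Let K ⊆ E ⊆ L be differential fields with L a strongly normal extension of K. Then the group Gal_U(L/E) of differential automorphisms of ⟨L, C_U⟩ fixing ⟨E, C_U⟩ is a subgroup of Gal_U(L/K); moreover if every element of Hom_K(E, U) maps ⟨E, C_U⟩ into itself (e.g., if E/K is strongly normal), then Gal_U(L/E) is a normal subgroup of Gal_U(L/K). -/
/-!
`Gal_U(L/E)` is the intersection of the group of differential automorphisms of `⟨L, C_U⟩` with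
the pointwise stabiliser of `⟨E, C_U⟩`. The former is a group because `⟨L, C_U⟩` is closed under
the derivation, so the inverse of a differential automorphism is again differential; enlarging the
fixed field only shrinks the stabiliser, whence `Gal_U(L/E) ≤ Gal_U(L/K)`. For normality it
suffices that every `σ ∈ Gal_U(L/K)` maps `⟨E, C_U⟩` into itself: restricted to `E` it is a
differential `K`-embedding, so it sends `E` into `⟨E, C_U⟩` by hypothesis, and it sends constants
to constants.
-/

def Derivation.ofLeibniz {U : Type*} [CommRing U] (D : U → U)
    (hadd : ∀ a b, D (a + b) = D a + D b)
    (hleib : ∀ a b, D (a * b) = a * D b + D a * b) : Derivation ℤ U U :=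
  Derivation.mk' (AddMonoidHom.mk' D hadd).toIntLinearMap fun a b => by
    simpa [smul_eq_mul, mul_comm b] using hleib a b

theorem Derivation.mapsTo_subfieldClosure {R K : Type*} [CommRing R] [Field K] [Algebra R K]
    (d : Derivation R K K) {s : Set K} (hs : Set.MapsTo d s (Subfield.closure s)) :
    Set.MapsTo d (Subfield.closure s) (Subfield.closure s) := by
  intro x hx
  induction hx using Subfield.closure_induction with
  | mem x hx => exact hs hx
  | one => simp
  | add x y _ _ hx hy => rw [map_add]; exact add_mem hx hy
  | neg x _ hx => rw [map_neg]; exact neg_mem hx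
  | inv x hx' hx =>
    rw [d.leibniz_inv, smul_eq_mul]
    exact mul_mem (neg_mem (pow_mem (inv_mem hx') 2)) hx
  | mul x y hx' hy' hx hy =>
    rw [d.leibniz, smul_eq_mul, smul_eq_mul]
    exact add_mem (mul_mem hx' hy) (mul_mem hy' hx)

theorem Subfield.apply_mem_of_mem_closure {U : Type*} [Field U] {M T : Subfield U} {s : Set U}
    (hsM : s ⊆ M) (g : M →+* U) (hs : ∀ x : M, (x : U) ∈ s → g x ∈ T) (x : M)
    (hx : (x : U) ∈ Subfield.closure s) : g x ∈ T := by
  have hle : Subfield.closure s ≤ (T.comap g).map M.subtype :=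
    Subfield.closure_le.mpr fun u hu => ⟨⟨u, hsM hu⟩, hs _ hu, rfl⟩
  obtain ⟨y, hy, hyx⟩ := hle hx
  rwa [← Subtype.ext hyx]

section DifferentialGaloisGroup

variable {U : Type*} [Field U] (D : U → U) (M : Subfield U) (hM : Set.MapsTo D M M)

def differentialRingAut : Subgroup (RingAut M) where
  carrier := {σ | ∀ x y : M, D x = y → D (σ x) = σ y}
  one_mem' _ _ h := h
  mul_mem' hσ hτ x y h := hσ _ _ (hτ x y h)
  inv_mem' {σ} hσ x y h := by
    set b : M := ⟨D (σ⁻¹ x), hM (σ⁻¹ x).2⟩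
    have hy : y = σ b := Subtype.ext (h.symm.trans (by simpa using hσ (σ⁻¹ x) b rfl))
    rw [hy]
    exact congrArg Subtype.val (σ.symm_apply_apply b).symm

/-- For `M = ⟨L, C_U⟩` and `F = ⟨F₀, C_U⟩` this is `Gal_U(L/F₀)`. -/
def diffGaloisGroup (F : Subfield U) : Subgroup (RingAut M) :=
  differentialRingAut D M hM ⊓ fixingSubgroup (RingAut M) {x : M | (x : U) ∈ F}

variable {D M hM}

theorem mem_diffGaloisGroup {F : Subfield U} {σ : RingAut M} :
    σ ∈ diffGaloisGroup D M hM F ↔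
      (∀ x y : M, D x = y → D (σ x) = σ y) ∧ ∀ x : M, (x : U) ∈ F → σ x = x := by
  simp only [diffGaloisGroup, Subgroup.mem_inf, mem_fixingSubgroup_iff, RingAut.smul_def]
  rfl

theorem diffGaloisGroup_antitone : Antitone (diffGaloisGroup D M hM) := fun _ _ h =>
  inf_le_inf_left _ (fixingSubgroup_antitone _ _ fun _ hx => h hx)

theorem conj_mem_diffGaloisGroup {F : Subfield U} {σ τ : RingAut M}
    (hσ : σ ∈ differentialRingAut D M hM) (hτ : τ ∈ diffGaloisGroup D M hM F)
    (hσF : ∀ x : M, (x : U) ∈ F → (σ⁻¹ x : U) ∈ F) : σ * τ * σ⁻¹ ∈ diffGaloisGroup D M hM F := by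
  refine mem_diffGaloisGroup.mpr ⟨mul_mem (mul_mem hσ hτ.1) (inv_mem hσ), fun x hx => ?_⟩
  show σ (τ (σ⁻¹ x)) = x
  rw [(mem_diffGaloisGroup.mp hτ).2 _ (hσF x hx)]
  exact σ.apply_symm_apply x

end DifferentialGaloisGroup

theorem apply_mem_closure_union_constants {U : Type*} [Field U] {D : U → U} {M K E C : Subfield U}
    (hC : ∀ x, x ∈ C ↔ D x = 0) (hEM : E ≤ M) (hCM : C ≤ M) {σ : RingAut M}
    (hσD : ∀ x y : M, D x = y → D (σ x) = σ y) (hσK : ∀ x : M, (x : U) ∈ K → σ x = x)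
    (hE : ∀ f : E →+* U, (∀ x y : E, D x = y → D (f x) = f y) →
      (∀ x : E, (x : U) ∈ K → f x = x) → ∀ x, f x ∈ Subfield.closure (E ∪ C))
    (x : M) (hx : (x : U) ∈ Subfield.closure (E ∪ C)) : (σ x : U) ∈ Subfield.closure (E ∪ C) := by
  refine Subfield.apply_mem_of_mem_closure (Set.union_subset hEM hCM) (M.subtype.comp σ.toRingHom)
    ?_ x hx
  rintro y (hy | hy)
  · exact hE (M.subtype.comp ((σ : M →+* M).comp (Subfield.inclusion hEM)))
      (fun _ _ h => hσD _ _ h) (fun _ ha => congrArg Subtype.val (hσK _ ha)) ⟨y, hy⟩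
  · have hσy : D (σ y) = 0 := by simpa using hσD y 0 ((hC y).mp hy)
    exact Subfield.subset_closure (Or.inr ((hC _).mpr hσy))

theorem stmt8_general {U : Type*} [Field U]
    (D : U → U)
    (hadd : ∀ a b : U, D (a + b) = D a + D b)
    (hleib : ∀ a b : U, D (a * b) = a * D b + D a * b)
    (K E L : Subfield U) (hKE : K ≤ E) (hEL : E ≤ L)
    (hLD : ∀ x ∈ L, D x ∈ L)
    (CU : Subfield U) (hCU : ∀ x : U, x ∈ CU ↔ D x = 0)
    (LC EC KC : Subfield U)
    (hLC : LC = Subfield.closure ((L : Set U) ∪ (CU : Set U)))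
    (hEC : EC = Subfield.closure ((E : Set U) ∪ (CU : Set U)))
    (hKC : KC = Subfield.closure ((K : Set U) ∪ (CU : Set U)))
    (GalE GalK : Set (RingAut (↥LC)))
    (hGalE : GalE = {σ | (∀ x y : ↥LC, D (x : U) = (y : U) → D (σ x : U) = (σ y : U)) ∧
      (∀ x : ↥LC, (x : U) ∈ EC → σ x = x)})
    (hGalK : GalK = {σ | (∀ x y : ↥LC, D (x : U) = (y : U) → D (σ x : U) = (σ y : U)) ∧
      (∀ x : ↥LC, (x : U) ∈ KC → σ x = x)}) :
    (1 ∈ GalE) ∧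
    (∀ σ ∈ GalE, ∀ τ ∈ GalE, σ * τ ∈ GalE) ∧
    (∀ σ ∈ GalE, σ⁻¹ ∈ GalE) ∧
    GalE ⊆ GalK ∧
    ((∀ f : (↥E) →+* U,
        (∀ x y : ↥E, D (x : U) = (y : U) → D (f x) = f y) →
        (∀ x : ↥E, (x : U) ∈ K → f x = (x : U)) →
        ∀ x : ↥E, f x ∈ EC) →
      ∀ σ ∈ GalK, ∀ τ ∈ GalE, σ * τ * σ⁻¹ ∈ GalE) := by
  have hM : Set.MapsTo D LC LC := by
    subst hLC
    refine (Derivation.ofLeibniz D hadd hleib).mapsTo_subfieldClosure ?_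
    rintro x (hx | hx)
    · exact Subfield.subset_closure (Or.inl (hLD x hx))
    · show D x ∈ _
      rw [(hCU x).mp hx]
      exact zero_mem _
  have hGalE' : GalE = diffGaloisGroup D LC hM EC := by
    ext σ; rw [hGalE]; exact mem_diffGaloisGroup.symm
  have hGalK' : GalK = diffGaloisGroup D LC hM KC := by
    ext σ; rw [hGalK]; exact mem_diffGaloisGroup.symm
  have hKEC : KC ≤ EC := by
    rw [hKC, hEC]; exact Subfield.closure_mono (Set.union_subset_union_left _ hKE)
  subst hGalE' hGalK'
  refine ⟨one_mem _, fun σ hσ τ hτ => mul_mem hσ hτ, fun σ hσ => inv_mem hσ,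
    diffGaloisGroup_antitone hKEC, fun hE σ hσ τ hτ => conj_mem_diffGaloisGroup hσ.1 hτ ?_⟩
  have hσinv := mem_diffGaloisGroup.mp (inv_mem hσ)
  subst hLC hEC hKC
  exact apply_mem_closure_union_constants hCU
    (hEL.trans fun _ hx => Subfield.subset_closure (Or.inl hx))
    (fun _ hx => Subfield.subset_closure (Or.inr hx)) hσinv.1
    (fun x hx => hσinv.2 x (Subfield.subset_closure (Or.inl hx))) hE

/-- Let `K ⊆ E ⊆ L` be differential subfields of a differential field `U`,
with `L/K` strongly normal.  Then `Gal_U(L/E)` — the set of differential automorphisms of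
`⟨L, C_U⟩` fixing `⟨E, C_U⟩` pointwise — is a subgroup of `Gal_U(L/K)`; moreover, if every
differential `K`-embedding of `E` into `U` maps `E` into `⟨E, C_U⟩` (as holds when `E/K` is
strongly normal), then `Gal_U(L/E)` is a normal subgroup of `Gal_U(L/K)`. -/
theorem stmt8 {U : Type*} [Field U] [CharZero U]
    (D : U → U)
    (hadd : ∀ a b : U, D (a + b) = D a + D b)
    (hleib : ∀ a b : U, D (a * b) = a * D b + D a * b)
    (K E L : Subfield U) (hKE : K ≤ E) (hEL : E ≤ L)
    (hKD : ∀ x ∈ K, D x ∈ K) (hED : ∀ x ∈ E, D x ∈ E) (hLD : ∀ x ∈ L, D x ∈ L)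
    (CU : Subfield U) (hCU : ∀ x : U, x ∈ CU ↔ D x = 0)
    -- `L/K` strongly normal, in the form used in the paper: every differential
    -- `K`-embedding of `L` into `U` maps `L` into `⟨L, C_U⟩`:
    (hSNL : ∀ f : (↥L) →+* U,
      (∀ x y : ↥L, D (x : U) = (y : U) → D (f x) = f y) →
      (∀ x : ↥L, (x : U) ∈ K → f x = (x : U)) →
      ∀ x : ↥L, f x ∈ Subfield.closure ((L : Set U) ∪ (CU : Set U)))
    (LC EC KC : Subfield U)
    (hLC : LC = Subfield.closure ((L : Set U) ∪ (CU : Set U)))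
    (hEC : EC = Subfield.closure ((E : Set U) ∪ (CU : Set U)))
    (hKC : KC = Subfield.closure ((K : Set U) ∪ (CU : Set U)))
    (GalE GalK : Set (RingAut (↥LC)))
    (hGalE : GalE = {σ | (∀ x y : ↥LC, D (x : U) = (y : U) → D (σ x : U) = (σ y : U)) ∧
      (∀ x : ↥LC, (x : U) ∈ EC → σ x = x)})
    (hGalK : GalK = {σ | (∀ x y : ↥LC, D (x : U) = (y : U) → D (σ x : U) = (σ y : U)) ∧
      (∀ x : ↥LC, (x : U) ∈ KC → σ x = x)}) :
    (1 ∈ GalE) ∧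
    (∀ σ ∈ GalE, ∀ τ ∈ GalE, σ * τ ∈ GalE) ∧
    (∀ σ ∈ GalE, σ⁻¹ ∈ GalE) ∧
    GalE ⊆ GalK ∧
    ((∀ f : (↥E) →+* U,
        (∀ x y : ↥E, D (x : U) = (y : U) → D (f x) = f y) →
        (∀ x : ↥E, (x : U) ∈ K → f x = (x : U)) →
        ∀ x : ↥E, f x ∈ EC) →
      ∀ σ ∈ GalK, ∀ τ ∈ GalE, σ * τ * σ⁻¹ ∈ GalE) :=
  stmt8_general D hadd hleib K E L hKE hEL hLD CU hCU LC EC KC hLC hEC hKC GalE GalK hGalE hGalK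
end

section
/- Let K ⊆ E ⊆ L be differential fields with L/K and E/K strongly normal, and U an extension of L. The restriction map f : Gal_U(L/K) → Gal_U(E/K), σ ↦ σ|⟨E,C_U⟩, is a well-defined group homomorphism with kernel Gal_U(L/E); hence Gal_U(L/K)/Gal_U(L/E) embeds into Gal_U(E/K). -/
/-- Let `K ⊆ E ⊆ L` be differential subfields of a differential field `U`
with `L/K` and `E/K` strongly normal.  The restriction map
`f : Gal_U(L/K) → Gal_U(E/K)`, `σ ↦ σ|⟨E,C_U⟩`, is well defined (each `σ ∈ Gal_U(L/K)` maps
the part of `⟨E, C_U⟩` inside `⟨L, C_U⟩` bijectively to itself) and is a group homomorphism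
with kernel `Gal_U(L/E)`; hence `Gal_U(L/K)/Gal_U(L/E)` embeds into `Gal_U(E/K)`:
restrictions of `σ, τ` agree iff `σ⁻¹τ ∈ Gal_U(L/E)`.  Strong normality is used through the
consequence that for any differential `K`-embedding `f` of `E` (resp. `L`) into `U` one has
`⟨f(E), C_U⟩ = ⟨E, C_U⟩` (resp. for `L`). -/
theorem stmt9 {U : Type*} [Field U] [CharZero U]
    (D : U → U)
    (hadd : ∀ a b : U, D (a + b) = D a + D b)
    (hleib : ∀ a b : U, D (a * b) = a * D b + D a * b)
    (K E L : Subfield U) (hKE : K ≤ E) (hEL : E ≤ L)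
    (hKD : ∀ x ∈ K, D x ∈ K) (hED : ∀ x ∈ E, D x ∈ E) (hLD : ∀ x ∈ L, D x ∈ L)
    (CU : Subfield U) (hCU : ∀ x : U, x ∈ CU ↔ D x = 0)
    (LC EC KC : Subfield U)
    (hLC : LC = Subfield.closure ((L : Set U) ∪ (CU : Set U)))
    (hEC : EC = Subfield.closure ((E : Set U) ∪ (CU : Set U)))
    (hKC : KC = Subfield.closure ((K : Set U) ∪ (CU : Set U)))
    -- strong normality of `E/K`, via the consequence `⟨σ(E), C_U⟩ = ⟨E, C_U⟩`:
    (hSNE : ∀ f : (↥E) →+* U,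
      (∀ x y : ↥E, D (x : U) = (y : U) → D (f x) = f y) →
      (∀ x : ↥E, (x : U) ∈ K → f x = (x : U)) →
      Subfield.closure (Set.range (fun x : ↥E => f x) ∪ (CU : Set U)) = EC)
    -- strong normality of `L/K`, via the same consequence:
    (hSNL : ∀ f : (↥L) →+* U,
      (∀ x y : ↥L, D (x : U) = (y : U) → D (f x) = f y) →
      (∀ x : ↥L, (x : U) ∈ K → f x = (x : U)) →
      Subfield.closure (Set.range (fun x : ↥L => f x) ∪ (CU : Set U)) = LC)
    (GalE GalK : Set (RingAut (↥LC)))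
    (hGalE : GalE = {σ | (∀ x y : ↥LC, D (x : U) = (y : U) → D (σ x : U) = (σ y : U)) ∧
      (∀ x : ↥LC, (x : U) ∈ EC → σ x = x)})
    (hGalK : GalK = {σ | (∀ x y : ↥LC, D (x : U) = (y : U) → D (σ x : U) = (σ y : U)) ∧
      (∀ x : ↥LC, (x : U) ∈ KC → σ x = x)}) :
    -- well-definedness of the restriction map to `Gal_U(E/K)`:
    (∀ σ ∈ GalK, (∀ x : ↥LC, (x : U) ∈ EC → (σ x : U) ∈ EC) ∧
      (∀ y : U, y ∈ EC → ∃ x : ↥LC, (x : U) ∈ EC ∧ (σ x : U) = y)) ∧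
    -- its kernel is `Gal_U(L/E)`:
    (∀ σ ∈ GalK, (σ ∈ GalE ↔ ∀ x : ↥LC, (x : U) ∈ EC → σ x = x)) ∧
    -- hence the quotient embeds: restrictions agree iff `σ⁻¹ * τ ∈ Gal_U(L/E)`:
    (∀ σ ∈ GalK, ∀ τ ∈ GalK,
      (σ⁻¹ * τ ∈ GalE ↔ ∀ x : ↥LC, (x : U) ∈ EC → σ x = τ x)) := by

  subst hLC hEC hKC hGalE hGalK
  -- basic facts about the derivation D
  have hD0 : D 0 = 0 := by
    have h := hadd 0 0
    rw [add_zero] at h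
    exact (left_eq_add.mp h)
  have hD1 : D 1 = 0 := by
    have h := hleib 1 1
    simp only [mul_one, one_mul] at h
    exact (left_eq_add.mp h)
  have hDneg : ∀ a : U, D (-a) = -D a := by
    intro a
    have h := hadd a (-a)
    rw [add_neg_cancel, hD0] at h
    exact (eq_neg_of_add_eq_zero_right h.symm)
  -- closure subfields
  have hL_LC : (L : Set U) ⊆ (Subfield.closure ((L : Set U) ∪ (CU : Set U)) : Set U) :=
    fun x hx => Subfield.subset_closure (Or.inl hx)
  have hCU_LC : (CU : Set U) ⊆ (Subfield.closure ((L : Set U) ∪ (CU : Set U)) : Set U) :=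
    fun x hx => Subfield.subset_closure (Or.inr hx)
  have hCU_KC : (CU : Set U) ⊆ (Subfield.closure ((K : Set U) ∪ (CU : Set U)) : Set U) :=
    fun x hx => Subfield.subset_closure (Or.inr hx)
  have hK_KC : (K : Set U) ⊆ (Subfield.closure ((K : Set U) ∪ (CU : Set U)) : Set U) :=
    fun x hx => Subfield.subset_closure (Or.inl hx)
  have hE_LC : ∀ x ∈ E, x ∈ Subfield.closure ((L : Set U) ∪ (CU : Set U)) :=
    fun x hx => hL_LC (hEL hx)
  set LCs := Subfield.closure ((L : Set U) ∪ (CU : Set U)) with hLCsdef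
  set ECs := Subfield.closure ((E : Set U) ∪ (CU : Set U)) with hECsdef
  -- D maps LCs into itself
  have hDLC : ∀ u ∈ LCs, D u ∈ LCs := by
    let S : Subfield U :=
      { carrier := {u : U | u ∈ LCs ∧ D u ∈ LCs}
        zero_mem' := ⟨zero_mem _, by rw [hD0]; exact zero_mem _⟩
        one_mem' := ⟨one_mem _, by rw [hD1]; exact zero_mem _⟩
        add_mem' := fun {a b} ha hb =>
          ⟨add_mem ha.1 hb.1, by rw [hadd]; exact add_mem ha.2 hb.2⟩
        mul_mem' := fun {a b} ha hb =>
          ⟨mul_mem ha.1 hb.1, by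
            rw [hleib]; exact add_mem (mul_mem ha.1 hb.2) (mul_mem ha.2 hb.1)⟩
        neg_mem' := fun {a} ha =>
          ⟨neg_mem ha.1, by rw [hDneg]; exact neg_mem ha.2⟩
        inv_mem' := by
          intro a ha
          refine ⟨inv_mem ha.1, ?_⟩
          by_cases h0 : a = 0
          · rw [h0, inv_zero, hD0]; exact zero_mem _
          · have h := hleib a a⁻¹
            rw [mul_inv_cancel₀ h0, hD1] at h
            have h2 : a * D a⁻¹ = -(D a * a⁻¹) := eq_neg_of_add_eq_zero_left h.symm
            have h3 : D a⁻¹ = -(D a * a⁻¹ * a⁻¹) := by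
              field_simp at h2 ⊢
              linear_combination h2
            rw [h3]
            exact neg_mem (mul_mem (mul_mem ha.2 (inv_mem ha.1)) (inv_mem ha.1)) }
    have hle : LCs ≤ S := by
      rw [hLCsdef]
      refine Subfield.closure_le.mpr ?_
      rintro u (hu | hu)
      · exact ⟨hL_LC hu, hL_LC (hLD u hu)⟩
      · refine ⟨hCU_LC hu, ?_⟩
        rw [(hCU u).mp hu]
        exact zero_mem _
    exact fun u hu => (hle hu).2
  set ι : ↥LCs →+* U := LCs.subtype with hιdef
  have hιval : ∀ x : ↥LCs, ι x = (x : U) := fun x => rfl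
  have hιinj : Function.Injective ι := Subtype.val_injective
  -- the key well-definedness fact, for any σ ∈ Gal_U(L/K)
  have key : ∀ σ : RingAut ↥LCs,
      (∀ x y : ↥LCs, D (x : U) = (y : U) → D (σ x : U) = (σ y : U)) →
      (∀ x : ↥LCs, (x : U) ∈ Subfield.closure ((K : Set U) ∪ (CU : Set U)) → σ x = x) →
      (∀ x : ↥LCs, (x : U) ∈ ECs → (σ x : U) ∈ ECs) ∧
      (∀ y : U, y ∈ ECs → ∃ x : ↥LCs, (x : U) ∈ ECs ∧ (σ x : U) = y) := by
    intro σ hdiff hfix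
    set ψ : ↥LCs →+* U := ι.comp σ.toRingHom with hψdef
    have hψval : ∀ x : ↥LCs, ψ x = (σ x : U) := fun x => rfl
    have hEle : E ≤ LCs := fun x hx => hE_LC x hx
    set f : ↥E →+* U := ψ.comp (Subfield.inclusion hEle) with hfdef
    have hfval : ∀ x : ↥E, f x = (σ ⟨(x : U), hEle x.2⟩ : U) := fun x => rfl
    have hfdiff : ∀ x y : ↥E, D (x : U) = (y : U) → D (f x) = f y := by
      intro x y hxy
      exact hdiff ⟨(x : U), hEle x.2⟩ ⟨(y : U), hEle y.2⟩ hxy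
    have hfK : ∀ x : ↥E, (x : U) ∈ K → f x = (x : U) := by
      intro x hx
      have := hfix ⟨(x : U), hEle x.2⟩ (hK_KC hx)
      rw [hfval, this]
    have hclos := hSNE f hfdiff hfK
    -- the preimage subfield
    set A : Subfield ↥LCs :=
      Subfield.closure (ι ⁻¹' (((E : Set U) ∪ (CU : Set U)))) with hAdef
    have hSsub : ((E : Set U) ∪ (CU : Set U)) ⊆ (LCs : Set U) := by
      rintro u (hu | hu)
      · exact hE_LC u hu
      · exact hCU_LC hu
    have himg : ι '' (ι ⁻¹' (((E : Set U) ∪ (CU : Set U)))) =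
        ((E : Set U) ∪ (CU : Set U)) := by
      rw [Set.image_preimage_eq_inter_range]
      have : Set.range ι = (LCs : Set U) := Subtype.range_coe
      rw [this, Set.inter_eq_left]
      exact hSsub
    have hmapι : A.map ι = ECs := by
      rw [hAdef, RingHom.map_field_closure, himg, hECsdef]
    have himg2 : ψ '' (ι ⁻¹' (((E : Set U) ∪ (CU : Set U)))) =
        (Set.range (fun x : ↥E => f x) ∪ (CU : Set U)) := by
      ext u
      constructor
      · rintro ⟨x, hx, rfl⟩
        rcases hx with hx | hx
        · exact Or.inl ⟨⟨(x : U), hx⟩, rfl⟩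
        · have hfixed : σ x = x := hfix x (hCU_KC hx)
          right
          rw [hψval, hfixed]
          exact hx
      · rintro (⟨e, rfl⟩ | hu)
        · exact ⟨⟨(e : U), hEle e.2⟩, Or.inl e.2, rfl⟩
        · have hmem : u ∈ LCs := hCU_LC hu
          refine ⟨⟨u, hmem⟩, Or.inr hu, ?_⟩
          rw [hψval, hfix ⟨u, hmem⟩ (hCU_KC hu)]
    have hmapψ : A.map ψ = ECs := by
      rw [hAdef, RingHom.map_field_closure, himg2]
      exact hclos
    constructor
    · intro x hx
      have hxA : x ∈ A := by
        have : (x : U) ∈ A.map ι := by rw [hmapι]; exact hx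
        rcases Subfield.mem_map.mp this with ⟨a, haA, hae⟩
        have : a = x := hιinj hae
        rwa [this] at haA
      have : ψ x ∈ A.map ψ := Subfield.mem_map.mpr ⟨x, hxA, rfl⟩
      rw [hmapψ] at this
      exact this
    · intro y hy
      have : y ∈ A.map ψ := by rw [hmapψ]; exact hy
      rcases Subfield.mem_map.mp this with ⟨x, hxA, hxe⟩
      have hxEC : (x : U) ∈ ECs := by
        rw [← hmapι]
        exact Subfield.mem_map.mpr ⟨x, hxA, rfl⟩
      exact ⟨x, hxEC, hxe⟩
  -- inverse of a differential automorphism is differential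
  have hinvdiff : ∀ σ : RingAut ↥LCs,
      (∀ x y : ↥LCs, D (x : U) = (y : U) → D (σ x : U) = (σ y : U)) →
      (∀ x y : ↥LCs, D (x : U) = (y : U) → D ((σ⁻¹) x : U) = ((σ⁻¹) y : U)) := by
    intro σ hdiff x y hxy
    set a : ↥LCs := (σ⁻¹) x with ha
    set c : ↥LCs := ⟨D (a : U), hDLC _ a.2⟩ with hc
    have h1 : D (σ a : U) = (σ c : U) := hdiff a c rfl
    have h2 : σ a = x := RingEquiv.apply_symm_apply σ x
    rw [h2, hxy] at h1
    have h3 : σ c = y := Subtype.val_injective h1.symm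
    have h4 : c = (σ⁻¹) y := by rw [← h3]; exact (RingEquiv.symm_apply_apply σ c).symm
    show D (a : U) = ((σ⁻¹) y : U)
    rw [← h4]
  refine ⟨?_, ?_, ?_⟩
  · intro σ hσ
    exact key σ hσ.1 hσ.2
  · intro σ hσ
    exact ⟨fun h => h.2, fun h => ⟨hσ.1, h⟩⟩
  · intro σ hσ τ hτ
    constructor
    · intro h x hx
      have hfx : (σ⁻¹) (τ x) = x := h.2 x hx
      have h2 := congrArg σ hfx
      have h3 : τ x = σ x := (RingEquiv.apply_symm_apply σ (τ x)).symm.trans h2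
      exact h3.symm
    · intro h
      constructor
      · intro x y hxy
        exact hinvdiff σ hσ.1 (τ x) (τ y) (hτ.1 x y hxy)
      · intro x hx
        show (σ⁻¹) (τ x) = x
        rw [← h x hx]
        exact RingEquiv.symm_apply_apply σ x
end

section
/- Let K be a differential field with real closed constant field C, K = R with trivial derivation, E = R⟨t⟩ with D(t) = t, and L = R⟨u⟩ with u² = t (so D(u) = u/2). Then the differential automorphism σ of ⟨E, C_U⟩ over ⟨K, C_U⟩ with σ(t) = −t does not extend to a differential automorphism of ⟨L, C_U⟩ over ⟨K, C_U⟩, where C_U is a real closed field of constants. -/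
/-!
A ring automorphism of `⟨L, C_U⟩` maps the square `t = u²` to the square of the image of `u`,
which is nonnegative in the ordering of `U`; but `-t = -u²` is negative since `u ≠ 0`.
-/

theorem coe_map_sq_nonneg {U S : Type*} [CommRing U] [LinearOrder U] [IsStrictOrderedRing U]
    [SetLike S U] [SubsemiringClass S U] {s : S} (τ : s →+* s) (y : s) :
    0 ≤ (τ (y ^ 2) : U) := by
  rw [map_pow, SubmonoidClass.coe_pow]
  exact sq_nonneg _

theorem stmt10_general {U : Type*} [Field U] [LinearOrder U] [IsStrictOrderedRing U]
    (D : U → U)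
    (R : Subfield U)
    (t u : U) (hu : u ^ 2 = t) (hu0 : u ≠ 0)
    (CU : Subfield U)
    (LC KC : Subfield U)
    (hLC : LC = Subfield.closure (((R : Set U) ∪ {u}) ∪ (CU : Set U))) :
    ∀ τ : RingAut (↥LC),
      (∀ x y : ↥LC, D (x : U) = (y : U) → D (τ x : U) = (τ y : U)) →
      (∀ x : ↥LC, (x : U) ∈ KC → τ x = x) →
      ∀ x : ↥LC, (x : U) = t → (τ x : U) ≠ -t := by
  intro τ _ _ x hx hτx
  have huLC : u ∈ LC := hLC ▸ Subfield.subset_closure (Or.inl (Or.inr rfl))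
  have hx_sq : x = ⟨u, huLC⟩ ^ 2 := Subtype.ext (by simp [hx, hu])
  have h_nonneg : 0 ≤ (τ x : U) := hx_sq ▸ coe_map_sq_nonneg τ.toRingHom _
  have h_neg : -t < 0 := hu ▸ neg_lt_zero.mpr (sq_pos_of_ne_zero hu0)
  exact h_neg.not_ge (hτx ▸ h_nonneg)

/-- Let `U` be an ordered differential field (e.g. a model of CODF) with
real closed constant field `C_U`, containing a copy `R` of the reals with trivial derivation,
an element `t` with `D t = t`, and `u` with `u² = t` (so `D u = u/2`).  With `K = R`,
`E = R⟨t⟩` and `L = R⟨u⟩`, no differential automorphism of `⟨L, C_U⟩` over `⟨K, C_U⟩` can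
send `t` to `−t`; in particular the automorphism `σ` of `⟨E, C_U⟩` over `⟨K, C_U⟩` with
`σ t = −t` does not extend to `⟨L, C_U⟩`. -/
theorem stmt10 {U : Type*} [Field U] [LinearOrder U] [IsStrictOrderedRing U]
    (D : U → U)
    (hadd : ∀ a b : U, D (a + b) = D a + D b)
    (hleib : ∀ a b : U, D (a * b) = a * D b + D a * b)
    (R : Subfield U) (e : ℝ ≃+* ↥R)
    (hRD : ∀ x ∈ R, D x = 0)
    (t u : U) (hDt : D t = t) (hu : u ^ 2 = t) (hu0 : u ≠ 0)
    (hDu : D u = u / 2)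
    (CU : Subfield U) (hCU : ∀ x : U, x ∈ CU ↔ D x = 0)
    -- `C_U` is real closed:
    (hCUsq : ∀ c : ↥CU, 0 < (c : U) → ∃ d : ↥CU, d * d = c)
    (hCUodd : ∀ p : Polynomial (↥CU), Odd p.natDegree → ∃ z : ↥CU, p.eval z = 0)
    (LC KC : Subfield U)
    (hLC : LC = Subfield.closure (((R : Set U) ∪ {u}) ∪ (CU : Set U)))
    (hKC : KC = Subfield.closure ((R : Set U) ∪ (CU : Set U))) :
    ∀ τ : RingAut (↥LC),
      (∀ x y : ↥LC, D (x : U) = (y : U) → D (τ x : U) = (τ y : U)) →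
      (∀ x : ↥LC, (x : U) ∈ KC → τ x = x) →
      ∀ x : ↥LC, (x : U) = t → (τ x : U) ≠ -t :=
  stmt10_general D R t u hu hu0 CU LC KC hLC
end

section
/- Let L be the union of a directed family 𝓕 of intermediate differential fields F with K ⊆ F ⊆ L, each F/K strongly normal, and let Gal_U(L/K) be the group of differential automorphisms of ⟨L, C_U⟩ over ⟨K, C_U⟩. Then the restriction maps make {Gal_U(F/K)}_{F ∈ 𝓕} into an inverse system, and since ⋂_{F∈𝓕} Gal_U(L/F) = {1}, the natural map Gal_U(L/K) → lim← Gal_U(F/K) is an injective group homomorphism. -/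
/-!
The elements of `⟨L, C_U⟩` that a map sends into a given subfield form a subfield, so it suffices
to check such statements on generators. A differential `K`-automorphism `σ` of `⟨L, C_U⟩`
restricts to a differential `K`-embedding of `F`, which lands in `⟨F, C_U⟩` by strong normality,
and it sends constants to constants; hence `σ` maps `⟨F, C_U⟩` into itself. If `σ` fixes every
`⟨F, C_U⟩`, it fixes the generators `L ∪ C_U = ⋃ F ∪ C_U` of `⟨L, C_U⟩`, hence everything.
-/

namespace Subfield

variable {U : Type*} [Field U]

theorem mem_closure_preimage_subtype {S : Subfield U} {s : Set U} (hs : s ⊆ S) {x : S}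
    (hx : (x : U) ∈ closure s) : x ∈ closure (S.subtype ⁻¹' s) := by
  have hle : closure s ≤ (closure (S.subtype ⁻¹' s)).map S.subtype :=
    closure_le.2 fun z hz => ⟨⟨z, hs hz⟩, subset_closure hz, rfl⟩
  obtain ⟨y, hy, hyx⟩ := hle hx
  rwa [← Subtype.val_injective hyx]

theorem closure_preimage_subtype_eq_top {S : Subfield U} {s : Set U} (hS : S = closure s) :
    closure (S.subtype ⁻¹' s) = ⊤ := by
  subst hS
  exact eq_top_iff.2 fun x _ => mem_closure_preimage_subtype subset_closure x.2

end Subfield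

section

open Subfield

variable {U : Type*} [Field U] {D : U → U}

theorem apply_mem_closure_union_constants_s17 {K F CU LC : Subfield U}
    (hCU : ∀ x : U, x ∈ CU ↔ D x = 0) (hFLC : (F : Set U) ⊆ LC) (hCULC : (CU : Set U) ⊆ LC)
    (hSN : ∀ f : F →+* U, (∀ x y : F, D (x : U) = (y : U) → D (f x) = f y) →
      (∀ x : F, (x : U) ∈ K → f x = (x : U)) → ∀ x : F, f x ∈ closure ((F : Set U) ∪ CU))
    (f : LC →+* U) (hdiff : ∀ x y : LC, D (x : U) = (y : U) → D (f x) = f y)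
    (hfix : ∀ x : LC, (x : U) ∈ K → f x = (x : U))
    {x : LC} (hx : (x : U) ∈ closure ((F : Set U) ∪ CU)) : f x ∈ closure ((F : Set U) ∪ CU) := by
  suffices closure (LC.subtype ⁻¹' (F ∪ CU)) ≤ (closure ((F : Set U) ∪ CU)).comap f from
    this (mem_closure_preimage_subtype (Set.union_subset hFLC hCULC) hx)
  refine closure_le.2 ?_
  rintro z (hz | hz)
  · exact hSN (f.comp (inclusion hFLC)) (fun a b => hdiff (inclusion hFLC a) (inclusion hFLC b))
      (fun a => hfix (inclusion hFLC a)) ⟨z, hz⟩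
  · have hconst : D (f z) = 0 := by
      simpa using hdiff z 0 (by simpa using (hCU z).1 hz)
    exact subset_closure (Or.inr ((hCU _).2 hconst))

theorem eq_subtype_of_forall_apply_eq {ι : Type*} {L CU LC : Subfield U} {F FC : ι → Subfield U}
    (hL : (L : Set U) = ⋃ i, (F i : Set U)) (hLC : LC = closure ((L : Set U) ∪ CU))
    (hFC : ∀ i, (F i : Set U) ∪ CU ⊆ FC i)
    (f : LC →+* U) (hf : ∀ i, ∀ x : LC, (x : U) ∈ FC i → f x = x) : f = LC.subtype := by
  refine RingHom.eq_of_eqOn_of_field_closure_eq_top (closure_preimage_subtype_eq_top hLC) ?_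
  rintro x (hx | hx)
  · obtain ⟨i, hi⟩ : ∃ i, (x : U) ∈ F i := Set.mem_iUnion.1 (hL ▸ hx)
    exact hf i x (hFC i (Or.inl hi))
  · -- `1 ∈ L` makes the family nonempty
    obtain ⟨i, -⟩ : ∃ i, (1 : U) ∈ F i := Set.mem_iUnion.1 (hL ▸ L.one_mem)
    exact hf i x (hFC i (Or.inr hx))
end

theorem stmt17_general {U : Type*} [Field U]
    (D : U → U)
    (K : Subfield U)
    {ι : Type*} (F : ι → Subfield U)
    (L : Subfield U) (hL : (L : Set U) = ⋃ i, (F i : Set U))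
    (CU : Subfield U) (hCU : ∀ x : U, x ∈ CU ↔ D x = 0)
    (LC KC : Subfield U) (FC : ι → Subfield U)
    (hLC : LC = Subfield.closure ((L : Set U) ∪ (CU : Set U)))
    (hKC : KC = Subfield.closure ((K : Set U) ∪ (CU : Set U)))
    (hFC : ∀ i, FC i = Subfield.closure ((F i : Set U) ∪ (CU : Set U)))
    -- each `F i/K` strongly normal, via the consequence used for well-definedness:
    (hSN : ∀ i, ∀ f : (↥(F i)) →+* U,
      (∀ x y : ↥(F i), D (x : U) = (y : U) → D (f x) = f y) →
      (∀ x : ↥(F i), (x : U) ∈ K → f x = (x : U)) →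
      ∀ x : ↥(F i), f x ∈ FC i) :
    -- restriction maps are well defined (inverse system):
    (∀ σ : RingAut (↥LC),
      (∀ x y : ↥LC, D (x : U) = (y : U) → D (σ x : U) = (σ y : U)) →
      (∀ x : ↥LC, (x : U) ∈ KC → σ x = x) →
      ∀ i, ∀ x : ↥LC, (x : U) ∈ FC i → (σ x : U) ∈ FC i) ∧
    -- injectivity of the natural map into the inverse limit:
    (∀ σ : RingAut (↥LC),
      (∀ x y : ↥LC, D (x : U) = (y : U) → D (σ x : U) = (σ y : U)) →
      (∀ x : ↥LC, (x : U) ∈ KC → σ x = x) →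
      (∀ i, ∀ x : ↥LC, (x : U) ∈ FC i → σ x = x) → σ = 1) := by
  obtain rfl : FC = fun i => Subfield.closure ((F i : Set U) ∪ CU) := funext hFC
  have hFLC : ∀ i, (F i : Set U) ⊆ LC := fun i =>
    hLC ▸ (Set.subset_iUnion (fun i => (F i : Set U)) i).trans
      (hL ▸ Set.subset_union_left.trans Subfield.subset_closure)
  have hCULC : (CU : Set U) ⊆ LC := hLC ▸ Set.subset_union_right.trans Subfield.subset_closure
  have hfixK : ∀ σ : RingAut LC, (∀ x : LC, (x : U) ∈ KC → σ x = x) →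
      ∀ x : LC, (x : U) ∈ K → (σ x : U) = x := fun σ hfix x hx =>
    congrArg Subtype.val (hfix x (hKC ▸ Subfield.subset_closure (Or.inl hx)))
  refine ⟨fun σ hdiff hfix i x hx => apply_mem_closure_union_constants_s17 hCU (hFLC i) hCULC
    (hSN i) (LC.subtype.comp σ.toRingHom) hdiff (hfixK σ hfix) hx, fun σ _ _ hid => ?_⟩
  have hσ := eq_subtype_of_forall_apply_eq hL hLC (fun _ => Subfield.subset_closure)
    (LC.subtype.comp σ.toRingHom) fun i x hx => congrArg Subtype.val (hid i x hx)
  exact RingEquiv.ext fun x => Subtype.ext (RingHom.congr_fun hσ x)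

/-- Let `L` be the union of a directed family `𝓕 = (F i)` of intermediate
differential fields `K ⊆ F i ⊆ L`, each `F i/K` strongly normal (used through the
consequence that differential `K`-embeddings of `F i` into `U` map `F i` into
`⟨F i, C_U⟩`).  Then restriction makes the groups `Gal_U(F i/K)` into an inverse system:
every `σ ∈ Gal_U(L/K)` maps the part of each `⟨F i, C_U⟩` into itself; and since
`⋂ᵢ Gal_U(L/F i) = {1}`, the natural map `Gal_U(L/K) → lim← Gal_U(F i/K)` is an injective
group homomorphism: an automorphism restricting to the identity on every `⟨F i, C_U⟩`
is the identity. -/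
theorem stmt17 {U : Type*} [Field U] [CharZero U]
    (D : U → U)
    (hadd : ∀ a b : U, D (a + b) = D a + D b)
    (hleib : ∀ a b : U, D (a * b) = a * D b + D a * b)
    (K : Subfield U) (hKD : ∀ x ∈ K, D x ∈ K)
    {ι : Type*} [Nonempty ι] (F : ι → Subfield U)
    (hdir : Directed (· ≤ ·) F)
    (hKF : ∀ i, K ≤ F i) (hFD : ∀ i, ∀ x ∈ F i, D x ∈ F i)
    (L : Subfield U) (hL : (L : Set U) = ⋃ i, (F i : Set U))
    (CU : Subfield U) (hCU : ∀ x : U, x ∈ CU ↔ D x = 0)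
    (LC KC : Subfield U) (FC : ι → Subfield U)
    (hLC : LC = Subfield.closure ((L : Set U) ∪ (CU : Set U)))
    (hKC : KC = Subfield.closure ((K : Set U) ∪ (CU : Set U)))
    (hFC : ∀ i, FC i = Subfield.closure ((F i : Set U) ∪ (CU : Set U)))
    -- each `F i/K` strongly normal, via the consequence used for well-definedness:
    (hSN : ∀ i, ∀ f : (↥(F i)) →+* U,
      (∀ x y : ↥(F i), D (x : U) = (y : U) → D (f x) = f y) →
      (∀ x : ↥(F i), (x : U) ∈ K → f x = (x : U)) →
      ∀ x : ↥(F i), f x ∈ FC i) :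
    -- restriction maps are well defined (inverse system):
    (∀ σ : RingAut (↥LC),
      (∀ x y : ↥LC, D (x : U) = (y : U) → D (σ x : U) = (σ y : U)) →
      (∀ x : ↥LC, (x : U) ∈ KC → σ x = x) →
      ∀ i, ∀ x : ↥LC, (x : U) ∈ FC i → (σ x : U) ∈ FC i) ∧
    -- injectivity of the natural map into the inverse limit:
    (∀ σ : RingAut (↥LC),
      (∀ x y : ↥LC, D (x : U) = (y : U) → D (σ x : U) = (σ y : U)) →
      (∀ x : ↥LC, (x : U) ∈ KC → σ x = x) →
      (∀ i, ∀ x : ↥LC, (x : U) ∈ FC i → σ x = x) → σ = 1) :=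
  stmt17_general D K F L hL CU hCU LC KC FC hLC hKC hFC hSN
end

section
/- Let K be a differential field of characteristic 0 whose field of constants is algebraically closed in K, and let L be a finite Galois extension of K (with the unique extension of the derivation) such that C_K is relatively algebraically closed in L. Then C_L = C_K and L is generated over K by a finite-dimensional C_K-vector space invariant under Gal(L/K); consequently L is a Picard–Vessiot extension of K. -/
/-!
Differentiating the minimal polynomial `p` of a constant `x ∈ L` leaves a polynomial of smaller
degree (the leading coefficient is `1`) vanishing at `x`, so it is zero: `p` has constant
coefficients, and relative algebraic closedness gives `C_L = C_K`. Galois automorphisms commute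
with the derivation, since the derivative of a separable element is determined by its minimal
polynomial.

Let `w₁, …, wₙ` be a basis of the `C_L`-span `V` of `1` and the conjugates of a primitive
element. Being independent over the constants, the `wᵢ` have an invertible Wronskian, so there
is exactly one monic operator of order `n` killing them. Since `V` is Galois-stable, every `σ`
carries this operator to one that again kills `V`; by uniqueness its coefficients are fixed by
the Galois group, hence lie in `K`.
-/

open Polynomial Finset Submodule Set Differential
open scoped Matrix

def Derivation.ofAddLeibniz {R : Type*} [CommRing R] (D : R → R)
    (hadd : ∀ a b, D (a + b) = D a + D b) (hleib : ∀ a b, D (a * b) = a * D b + D a * b) :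
    Derivation ℤ R R :=
  Derivation.mk' (AddMonoidHom.mk' D hadd).toIntLinearMap fun a b => by
    simp [hleib, smul_eq_mul, mul_comm]

theorem Submodule.exists_linearIndependent_span_eq {F M : Type*} [DivisionRing F]
    [AddCommGroup M] [Module F M] (V : Submodule F M) [FiniteDimensional F V] :
    ∃ w : Fin (Module.finrank F V) → M, LinearIndependent F w ∧ span F (range w) = V := by
  let b := Module.finBasis F V
  refine ⟨fun i => b i, b.linearIndependent.map' _ V.ker_subtype, ?_⟩
  rw [show (range fun i => (b i : M)) = V.subtype '' range b from range_comp _ _, span_image,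
    b.span_eq, map_subtype_top]

namespace Differential

section Constants

variable (L : Type*) [Field L] [Differential L]

def constants : Subfield L where
  carrier := {x | x′ = 0}
  mul_mem' {a b} ha hb := by simp_all [Derivation.leibniz]
  one_mem' := Derivation.map_one_eq_zero _
  add_mem' {a b} ha hb := by simp_all
  zero_mem' := map_zero _
  neg_mem' {a} ha := by simp_all
  inv_mem' x hx := by simp_all [Derivation.leibniz_inv]

variable {L}

@[simp]
lemma mem_constants {x : L} : x ∈ constants L ↔ x′ = 0 := Iff.rfl

lemma iterate_deriv_const_mul {c : L} (hc : c′ = 0) (i : ℕ) (y : L) :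
    deriv^[i] (c * y) = c * deriv^[i] y := by
  induction i generalizing y with
  | zero => rfl
  | succ i ih => simp [ih, Derivation.leibniz, hc]

end Constants

variable {K L : Type*} [Field K] [Field L] [Algebra K L] [Differential K] [Differential L]
  [DifferentialAlgebra K L]

theorem mapCoeffs_minpoly_eq_zero {x : L} (hx : IsIntegral K x) (h : x′ = 0) :
    mapCoeffs (minpoly K x) = 0 := by
  by_contra hne
  have hroot : aeval x (mapCoeffs (minpoly K x)) = 0 := by
    simpa [h] using (deriv_aeval_eq x (minpoly K x)).symm
  have hlt : (mapCoeffs (minpoly K x)).degree < (minpoly K x).degree := by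
    rw [degree_eq_natDegree (minpoly.ne_zero hx), degree_lt_iff_coeff_zero]
    intro m hm
    obtain rfl | hm := (show (minpoly K x).natDegree ≤ m by exact_mod_cast hm).eq_or_lt
    · simp [(minpoly.monic hx).coeff_natDegree]
    · simp [coeff_eq_zero_of_natDegree_lt hm]
  exact (minpoly.degree_le_of_ne_zero K x hne hroot).not_gt hlt

lemma deriv_coeff_minpoly_eq_zero {x : L} (hx : IsIntegral K x) (h : x′ = 0) (k : ℕ) :
    ((minpoly K x).coeff k)′ = 0 := by
  simpa using congrArg (coeff · k) (mapCoeffs_minpoly_eq_zero hx h)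

section Wronskian

variable {L : Type*} [Field L] [Differential L]

def wronskianMatrix {ι : Type*} (k : ℕ) (w : ι → L) : Matrix (Fin k) ι L :=
  Matrix.of fun i j => deriv^[i] (w j)

lemma wronskianMatrix_mulVec_apply {ι : Type*} [Fintype ι] (k : ℕ) (w : ι → L) (c : ι → L)
    (i : Fin k) : (wronskianMatrix k w *ᵥ c) i = ∑ j, deriv^[i] (w j) * c j := rfl

lemma wronskianMatrix_mulVec_deriv_eq_zero {ι : Type*} [Fintype ι] {k : ℕ} {w : ι → L}
    {c : ι → L} (hc : wronskianMatrix (k + 1) w *ᵥ c = 0) :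
    wronskianMatrix k w *ᵥ (fun j => (c j)′) = 0 := by
  funext i
  have h₀ := congrFun hc i.castSucc
  have h₁ := congrFun hc i.succ
  simp only [wronskianMatrix_mulVec_apply, Fin.val_castSucc, Fin.val_succ, Pi.zero_apply]
    at h₀ h₁
  have hsplit : ∀ j, (deriv^[i] (w j) * c j)′
      = deriv^[i] (w j) * (c j)′ + deriv^[i + 1] (w j) * c j := fun j => by
    rw [Derivation.leibniz, Function.iterate_succ_apply', smul_eq_mul, smul_eq_mul, mul_comm (c j)]
  have := congrArg deriv h₀
  rw [map_sum, Finset.sum_congr rfl fun j _ => hsplit j, sum_add_distrib, h₁, add_zero,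
    map_zero] at this
  exact this

theorem det_wronskianMatrix_ne_zero :
    ∀ {n : ℕ} {w : Fin n → L}, LinearIndependent (constants L) w →
      (wronskianMatrix n w).det ≠ 0
  | 0, _, _ => by simp
  | n + 1, w, hw => by
    have ih := det_wronskianMatrix_ne_zero (hw.comp _ (Fin.castSucc_injective n))
    have key : ∀ c, wronskianMatrix n w *ᵥ c = 0 → c (Fin.last n) = 0 → c = 0 := by
      intro c hc hlast
      have hinit : wronskianMatrix n (w ∘ Fin.castSucc) *ᵥ (c ∘ Fin.castSucc) = 0 := by
        funext i
        simpa [wronskianMatrix_mulVec_apply, Fin.sum_univ_castSucc, hlast] using congrFun hc i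
      have hc_init : c ∘ Fin.castSucc = 0 := by
        by_contra h
        exact ih (Matrix.exists_mulVec_eq_zero_iff.mp ⟨_, h, hinit⟩)
      funext j
      induction j using Fin.lastCases with
      | last => exact hlast
      | cast j => exact congrFun hc_init j
    rw [Ne, ← Matrix.exists_mulVec_eq_zero_iff]
    -- Normalize a kernel vector to end in `1`: its derivative is a kernel vector of the first `n`
    -- rows ending in `0`, so it vanishes and the kernel vector is a constant relation.
    rintro ⟨c, hc0, hc⟩
    have htop : ∀ {d : Fin (n + 1) → L}, wronskianMatrix (n + 1) w *ᵥ d = 0 →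
        wronskianMatrix n w *ᵥ d = 0 := fun hd => funext fun i => congrFun hd i.castSucc
    have hlast : c (Fin.last n) ≠ 0 := fun h => hc0 (key c (htop hc) h)
    set d := (c (Fin.last n))⁻¹ • c
    have hd : wronskianMatrix (n + 1) w *ᵥ d = 0 := by rw [Matrix.mulVec_smul, hc, smul_zero]
    have hd_last : d (Fin.last n) = 1 := by simp [d, hlast]
    have hd_const : (fun j => (d j)′) = 0 :=
      key _ (wronskianMatrix_mulVec_deriv_eq_zero hd) (by simp [hd_last])
    have hrel := congrFun hd 0
    simp only [wronskianMatrix_mulVec_apply] at hrel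
    have := Fintype.linearIndependent_iff.mp hw (fun j => ⟨d j, congrFun hd_const j⟩)
      (by simpa [Subfield.smul_def, mul_comm] using hrel) (Fin.last n)
    simp [Subtype.ext_iff, hd_last] at this

end Wronskian

section LinearDiffOp

variable {L : Type*} [Field L] [Differential L] {n : ℕ}

def linearDiffOp (a : Fin n → L) : L →ₗ[constants L] L where
  toFun y := deriv^[n] y + ∑ i, a i * deriv^[i] y
  map_add' x y := by
    simp only [iterate_map_add, mul_add, sum_add_distrib]
    ring
  map_smul' c y := by
    simp only [Subfield.smul_def, smul_eq_mul, iterate_deriv_const_mul c.2, RingHom.id_apply,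
      mul_add, Finset.mul_sum]
    ring_nf

lemma linearDiffOp_apply (a : Fin n → L) (y : L) :
    linearDiffOp a y = deriv^[n] y + ∑ i, a i * deriv^[i] y := rfl

lemma linearDiffOp_apply_eq_add_vecMul (a : Fin n → L) {ι : Type*} [Fintype ι] (w : ι → L)
    (j : ι) : linearDiffOp a (w j) = deriv^[n] (w j) + (a ᵥ* wronskianMatrix n w) j := rfl

theorem exists_linearDiffOp_eq_zero {w : Fin n → L} (hw : (wronskianMatrix n w).det ≠ 0) :
    ∃ a : Fin n → L, ∀ j, linearDiffOp a (w j) = 0 := by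
  obtain ⟨a, ha⟩ := Matrix.vecMul_surjective_iff_isUnit.mpr
    ((Matrix.isUnit_iff_isUnit_det _).mpr hw.isUnit) (-fun j => deriv^[n] (w j))
  refine ⟨a, fun j => ?_⟩
  rw [linearDiffOp_apply_eq_add_vecMul, show a ᵥ* wronskianMatrix n w = _ from ha]
  simp

theorem eq_of_linearDiffOp_eq_zero {w : Fin n → L} (hw : (wronskianMatrix n w).det ≠ 0)
    {a b : Fin n → L} (ha : ∀ j, linearDiffOp a (w j) = 0)
    (hb : ∀ j, linearDiffOp b (w j) = 0) : a = b := by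
  rw [← sub_eq_zero]
  by_contra hab
  refine hw (Matrix.exists_vecMul_eq_zero_iff.mp ⟨a - b, hab, funext fun j => ?_⟩)
  have := ha j
  rw [linearDiffOp_apply_eq_add_vecMul, ← hb j, linearDiffOp_apply_eq_add_vecMul] at this
  simpa [Matrix.sub_vecMul, sub_eq_zero] using this

end LinearDiffOp

section Galois

variable {K L : Type*} [Field K] [Field L] [Algebra K L] [Differential L]

section ContainConstants

variable [ContainConstants K L]

lemma _root_.AlgEquiv.map_constants_smul (σ : L ≃ₐ[K] L) (c : constants L) (x : L) :
    σ (c • x) = c • σ x := by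
  obtain ⟨k, hk⟩ := mem_range_of_deriv_eq_zero K c.2
  rw [Subfield.smul_def, Subfield.smul_def, smul_eq_mul, smul_eq_mul, map_mul, ← hk, σ.commutes]

lemma _root_.AlgEquiv.mapsTo_span_constants (σ : L ≃ₐ[K] L) {S : Set L} (hS : MapsTo σ S S) :
    MapsTo σ (span (constants L) S) (span (constants L) S) := by
  let σC : L →ₗ[constants L] L :=
    { toFun := σ, map_add' := map_add σ, map_smul' := σ.map_constants_smul }
  exact fun x hx => (span_le (p := (span (constants L) S).comap σC)).mpr
    (fun s hs => subset_span (hS hs)) hx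

lemma span_constants_subset_adjoin (S : Set L) :
    (span (constants L) S : Set L) ⊆ IntermediateField.adjoin K S := by
  intro x hx
  induction hx using span_induction with
  | mem x hx => exact IntermediateField.subset_adjoin K S hx
  | zero => exact zero_mem _
  | add x y _ _ hx hy => exact add_mem hx hy
  | smul c x _ hx =>
    obtain ⟨k, hk⟩ := mem_range_of_deriv_eq_zero K c.2
    rw [Subfield.smul_def, smul_eq_mul, ← hk]
    exact mul_mem (IntermediateField.algebraMap_mem _ k) hx

/-- `w` is a basis of the constant span of `1` and the conjugates of a primitive element; the `1`
ensures `0 < n` also when `L = K`. -/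
theorem exists_galoisStable_basis [FiniteDimensional K L] [IsGalois K L] :
    ∃ (n : ℕ) (w : Fin n → L), 0 < n ∧ LinearIndependent (constants L) w ∧
      IntermediateField.adjoin K (range w) = ⊤ ∧
      ∀ (σ : L ≃ₐ[K] L) (j : Fin n), σ (w j) ∈ span (constants L) (range w) := by
  obtain ⟨θ, hθ⟩ := Field.exists_primitive_element K L
  let S : Set L := insert 1 (range fun τ : L ≃ₐ[K] L => τ θ)
  have hS : S.Finite := (Set.finite_range _).insert 1
  have := FiniteDimensional.span_of_finite (constants L) hS
  obtain ⟨w, hw, hspan⟩ := (span (constants L) S).exists_linearIndependent_span_eq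
  have hSσ (σ : L ≃ₐ[K] L) : MapsTo σ S S := by
    rintro _ (rfl | ⟨τ, rfl⟩)
    · simp [S]
    · exact mem_insert_of_mem _ ⟨σ * τ, rfl⟩
  refine ⟨_, w, ?_, hw, ?_, fun σ j => ?_⟩
  · exact Module.finrank_pos_iff_exists_ne_zero.mpr
      ⟨⟨1, subset_span (mem_insert 1 _)⟩, by simp⟩
  · refine top_unique (hθ ▸ IntermediateField.adjoin_simple_le_iff.mpr ?_)
    refine span_constants_subset_adjoin _ ?_
    rw [hspan]
    exact subset_span (mem_insert_of_mem _ ⟨1, rfl⟩)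
  · rw [hspan]
    exact σ.mapsTo_span_constants (hSσ σ) (hspan ▸ subset_span (mem_range_self j))

end ContainConstants

variable [Differential K] [DifferentialAlgebra K L]

lemma exists_deriv_eq_zero_and_algebraMap_eq [ContainConstants K L] {x : L} (hx : x′ = 0) :
    ∃ c : K, c′ = 0 ∧ algebraMap K L c = x := by
  obtain ⟨c, rfl⟩ := mem_range_of_deriv_eq_zero K hx
  refine ⟨c, (algebraMap K L).injective ?_, rfl⟩
  rw [← deriv_algebraMap, hx, map_zero]

section Separable

variable [Algebra.IsSeparable K L]

lemma _root_.AlgEquiv.iterate_deriv_apply (σ : L ≃ₐ[K] L) (i : ℕ) (x : L) :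
    σ (deriv^[i] x) = deriv^[i] (σ x) :=
  Function.Commute.iterate_right (f := σ) (fun y => algEquiv_deriv' σ y) i x

lemma _root_.AlgEquiv.map_linearDiffOp (σ : L ≃ₐ[K] L) {n : ℕ} (a : Fin n → L) (y : L) :
    σ (linearDiffOp a y) = linearDiffOp (fun i => σ (a i)) (σ y) := by
  simp [linearDiffOp_apply, map_sum, σ.iterate_deriv_apply]

end Separable

/-- The unique monic equation of order `n` annihilating `w` is fixed by `Gal(L/K)`. -/
theorem exists_linearDiffOp_algebraMap_eq_zero [FiniteDimensional K L] [IsGalois K L] {n : ℕ}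
    {w : Fin n → L} (hw : LinearIndependent (constants L) w)
    (hσ : ∀ (σ : L ≃ₐ[K] L) (j : Fin n), σ (w j) ∈ span (constants L) (range w)) :
    ∃ a : Fin n → K, ∀ j, linearDiffOp (fun i => algebraMap K L (a i)) (w j) = 0 := by
  have hdet := det_wronskianMatrix_ne_zero hw
  obtain ⟨A, hA⟩ := exists_linearDiffOp_eq_zero hdet
  have hspan : span (constants L) (range w) ≤ LinearMap.ker (linearDiffOp A) :=
    span_le.mpr (range_subset_iff.mpr hA)
  have hfix (σ : L ≃ₐ[K] L) : (fun i => σ (A i)) = A := by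
    refine eq_of_linearDiffOp_eq_zero hdet (fun j => ?_) hA
    rw [← σ.apply_symm_apply (w j), ← σ.map_linearDiffOp, hspan (hσ σ.symm j), map_zero]
  choose a ha using fun i => (IsGalois.mem_range_algebraMap_iff_fixed (A i)).mpr
    fun σ => congrFun (hfix σ) i
  refine ⟨a, fun j => ?_⟩
  simpa [ha] using hA j

end Galois

end Differential

theorem stmt19_general {K L : Type*} [Field K] [Field L] [Algebra K L]
    [FiniteDimensional K L] [IsGalois K L]
    (DK : K → K)
    (haddK : ∀ a b : K, DK (a + b) = DK a + DK b)
    (hleibK : ∀ a b : K, DK (a * b) = a * DK b + DK a * b)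
    (DL : L → L)
    (haddL : ∀ a b : L, DL (a + b) = DL a + DL b)
    (hleibL : ∀ a b : L, DL (a * b) = a * DL b + DL a * b)
    (hcomp : ∀ x : K, DL (algebraMap K L x) = algebraMap K L (DK x))
    -- `C_K` is relatively algebraically closed in `L`:
    (hrelL : ∀ x : L,
      (∃ p : Polynomial L, p ≠ 0 ∧
        (∀ k, ∃ c : K, DK c = 0 ∧ algebraMap K L c = p.coeff k) ∧ p.eval x = 0) →
      ∃ c : K, DK c = 0 ∧ algebraMap K L c = x) :
    -- (1) `C_L = C_K`:
    (∀ x : L, DL x = 0 ↔ ∃ c : K, DK c = 0 ∧ algebraMap K L c = x) ∧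
    -- (2) `L = K⟨V⟩` for a finite-dimensional `C_K`-space `V` invariant under `Gal(L/K)`:
    (∃ (m : ℕ) (v : Fin m → L),
      IntermediateField.adjoin K (Set.range v) = ⊤ ∧
      ∀ (σ : L ≃ₐ[K] L) (i : Fin m), ∃ c : Fin m → K,
        (∀ j, DK (c j) = 0) ∧ σ (v i) = ∑ j, algebraMap K L (c j) * v j) ∧
    -- (3) `L` is a Picard–Vessiot extension of `K`: there is a linear differential
    -- equation over `K` of some order `n` with `n` solutions in `L` linearly independent
    -- over the constants, whose solutions generate `L` over `K`:
    (∃ (n : ℕ) (_ : 0 < n) (a : Fin n → K) (w : Fin n → L),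
      (∀ i, DL^[n] (w i) + ∑ j : Fin n, algebraMap K L (a j) * DL^[(j : ℕ)] (w i) = 0) ∧
      (∀ c : Fin n → K, (∀ i, DK (c i) = 0) →
        ∑ i, algebraMap K L (c i) * w i = 0 → ∀ i, c i = 0) ∧
      IntermediateField.adjoin K
        {y : L | DL^[n] y + ∑ j : Fin n, algebraMap K L (a j) * DL^[(j : ℕ)] y = 0} = ⊤) := by
  let _ : Differential K := ⟨.ofAddLeibniz DK haddK hleibK⟩
  let _ : Differential L := ⟨.ofAddLeibniz DL haddL hleibL⟩
  have : DifferentialAlgebra K L := ⟨hcomp⟩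
  have : ContainConstants K L := ⟨fun {x} hx => by
    have hx_int := Algebra.IsIntegral.isIntegral (R := K) x
    obtain ⟨c, -, rfl⟩ := hrelL x ⟨(minpoly K x).map (algebraMap K L),
      map_ne_zero (minpoly.ne_zero hx_int),
      fun k => ⟨_, deriv_coeff_minpoly_eq_zero hx_int hx k, (coeff_map _ _).symm⟩,
      by rw [eval_map, ← aeval_def, minpoly.aeval]⟩
    exact ⟨c, rfl⟩⟩
  have hconst (x : L) : DL x = 0 ↔ ∃ c : K, DK c = 0 ∧ algebraMap K L c = x :=
    ⟨exists_deriv_eq_zero_and_algebraMap_eq,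
      fun ⟨c, hc, hcx⟩ => by rw [← hcx, hcomp, hc, map_zero]⟩
  obtain ⟨n, w, hn, hw, hadj, hσ⟩ := exists_galoisStable_basis (K := K) (L := L)
  obtain ⟨a, ha⟩ := exists_linearDiffOp_algebraMap_eq_zero hw hσ
  refine ⟨hconst, ⟨n, w, hadj, fun σ i => ?_⟩, n, hn, a, w, ha, fun c hc hsum => ?_, ?_⟩
  · obtain ⟨c, hc⟩ := (mem_span_range_iff_exists_fun _).mp (hσ σ i)
    choose k hk using fun j => exists_deriv_eq_zero_and_algebraMap_eq (K := K) (c j).2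
    exact ⟨k, fun j => (hk j).1, by simp [← hc, hk, Subfield.smul_def]⟩
  · have := Fintype.linearIndependent_iff.mp hw
      (fun i => ⟨algebraMap K L (c i), by
        rw [mem_constants, deriv_algebraMap, show (c i)′ = 0 from hc i, map_zero]⟩)
      (by simpa [Subfield.smul_def] using hsum)
    exact fun i => (algebraMap K L).injective (by simpa [Subtype.ext_iff] using this i)
  · exact top_unique (hadj ▸ IntermediateField.adjoin.mono _ _ _ (range_subset_iff.mpr ha))

/-- Let `K` be a differential field of characteristic 0 whose field of
constants `C_K` is algebraically closed in `K`, and let `L` be a finite Galois extension of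
`K` (with the unique extension `D_L` of the derivation) such that `C_K` is relatively
algebraically closed in `L`.  Then `C_L = C_K`, `L` is generated over `K` by a
finite-dimensional `C_K`-vector space invariant under `Gal(L/K)`, and consequently `L` is a
Picard–Vessiot extension of `K`.  ("Algebraic over `C_K`" is expressed as being a root of a
nonzero polynomial whose coefficients are constants.) -/
theorem stmt19 {K L : Type*} [Field K] [CharZero K] [Field L] [Algebra K L]
    [FiniteDimensional K L] [IsGalois K L]
    (DK : K → K)
    (haddK : ∀ a b : K, DK (a + b) = DK a + DK b)
    (hleibK : ∀ a b : K, DK (a * b) = a * DK b + DK a * b)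
    (DL : L → L)
    (haddL : ∀ a b : L, DL (a + b) = DL a + DL b)
    (hleibL : ∀ a b : L, DL (a * b) = a * DL b + DL a * b)
    (hcomp : ∀ x : K, DL (algebraMap K L x) = algebraMap K L (DK x))
    -- `C_K` is (relatively) algebraically closed in `K`:
    (hrelK : ∀ x : K,
      (∃ p : Polynomial K, p ≠ 0 ∧ (∀ k, DK (p.coeff k) = 0) ∧ p.eval x = 0) → DK x = 0)
    -- `C_K` is relatively algebraically closed in `L`:
    (hrelL : ∀ x : L,
      (∃ p : Polynomial L, p ≠ 0 ∧
        (∀ k, ∃ c : K, DK c = 0 ∧ algebraMap K L c = p.coeff k) ∧ p.eval x = 0) →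
      ∃ c : K, DK c = 0 ∧ algebraMap K L c = x) :
    -- (1) `C_L = C_K`:
    (∀ x : L, DL x = 0 ↔ ∃ c : K, DK c = 0 ∧ algebraMap K L c = x) ∧
    -- (2) `L = K⟨V⟩` for a finite-dimensional `C_K`-space `V` invariant under `Gal(L/K)`:
    (∃ (m : ℕ) (v : Fin m → L),
      IntermediateField.adjoin K (Set.range v) = ⊤ ∧
      ∀ (σ : L ≃ₐ[K] L) (i : Fin m), ∃ c : Fin m → K,
        (∀ j, DK (c j) = 0) ∧ σ (v i) = ∑ j, algebraMap K L (c j) * v j) ∧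
    -- (3) `L` is a Picard–Vessiot extension of `K`: there is a linear differential
    -- equation over `K` of some order `n` with `n` solutions in `L` linearly independent
    -- over the constants, whose solutions generate `L` over `K`:
    (∃ (n : ℕ) (_ : 0 < n) (a : Fin n → K) (w : Fin n → L),
      (∀ i, DL^[n] (w i) + ∑ j : Fin n, algebraMap K L (a j) * DL^[(j : ℕ)] (w i) = 0) ∧
      (∀ c : Fin n → K, (∀ i, DK (c i) = 0) →
        ∑ i, algebraMap K L (c i) * w i = 0 → ∀ i, c i = 0) ∧
      IntermediateField.adjoin K
        {y : L | DL^[n] y + ∑ j : Fin n, algebraMap K L (a j) * DL^[(j : ℕ)] y = 0} = ⊤) :=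
  stmt19_general DK haddK hleibK DL haddL hleibL hcomp hrelL
end
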